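/- Let G be an infinite abelian group. Then G ↛ (2,3,4,…)^FS: there exists a colouring c : G → ℕ such that for every n ∈ ℕ there is no subset X ⊆ G with |X| = n + 2 for which c takes the constant value n on FS(X). -/

import Mathlib

/-!
Choose a maximal independent subset `I` of `G`. By maximality every `g ≠ 0` has an integer
multiple `m • g` that is a nonzero element of the span of `I`, and by independence `m • g` has
unique coordinates in the cyclic groups `⟨i⟩`, `i ∈ I`. Colour `g` by `m`, the multiset `M` of
codes of its nonzero coordinates, and a number exceeding `r (r + 1) ^ (2 r)`, where `r = |M|`.
If `FS(X)` is monochromatic, every nonempty subset sum of the coordinate vectors `w a` of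
`m • a`, `a ∈ X`, has code multiset `M`. Counting pairs `(F, i)` with `i` in the support of
`∑ a ∈ F, w a` shows that the `w a` are supported on at most `2 r` indices, so they take at most
`(r + 1) ^ (2 r)` values; a value `v` is taken at most `r` times, since its multiples `κ • v`
are subset sums again and have pairwise distinct codes at a fixed index. So `|X|` is below the
colour.
-/

/-- `FS X` is the set of finite sums (with no repetitions) of elements of `X`. -/
def FS {G : Type*} [AddCommMonoid G] (X : Set G) : Set G :=
  {g | ∃ F : Finset G, F.Nonempty ∧ ↑F ⊆ X ∧ g = ∑ x ∈ F, x}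

open Finset

theorem sum_mem_FS {G : Type*} [AddCommMonoid G] {X : Set G} {F : Finset G} (hF : ↑F ⊆ X)
    (hne : F.Nonempty) : ∑ a ∈ F, a ∈ FS X :=
  ⟨F, hne, hF, rfl⟩

theorem mem_FS_of_mem {G : Type*} [AddCommMonoid G] {X : Set G} {a : G} (ha : a ∈ X) :
    a ∈ FS X := by
  simpa using sum_mem_FS (F := {a}) (by simpa using ha) (singleton_nonempty a)

section SubsetSums

variable {α ι A : Type*} [AddCommGroup A]

theorem two_pow_card_le_two_mul_card_filter_sum_ne_zero [DecidableEq α] [DecidableEq A]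
    (X : Finset α) (f : α → A) {a : α} (ha : a ∈ X) (hfa : f a ≠ 0) :
    2 ^ #X ≤ 2 * #{F ∈ X.powerset | ∑ b ∈ F, f b ≠ 0} := by
  -- Of `F` and `insert a F` (for `a ∉ F`), at least one has a nonzero sum.
  let g : Finset α → Finset α := fun F => if ∑ b ∈ F, f b ≠ 0 then F else insert a F
  have hg : Set.MapsTo g (X.erase a).powerset
      ({F ∈ X.powerset | ∑ b ∈ F, f b ≠ 0} : Finset (Finset α)) := by
    intro F hF
    have hFX : F ⊆ X.erase a := mem_powerset.mp hF
    have haF : a ∉ F := fun h => by simpa using hFX h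
    by_cases hF0 : ∑ b ∈ F, f b ≠ 0
    · simpa [g, hF0] using hFX.trans (erase_subset a X)
    · simp only [g, hF0, if_false, coe_filter, mem_powerset]
      refine ⟨insert_subset ha (hFX.trans (erase_subset a X)), ?_⟩
      rwa [sum_insert haF, not_not.mp hF0, add_zero]
  have hg_inj : Set.InjOn g (X.erase a).powerset := by
    have hleft : ∀ F ∈ (X.erase a).powerset, (g F).erase a = F := by
      intro F hF
      have haF : a ∉ F := fun h => by simpa using mem_powerset.mp hF h
      simp only [g]
      split_ifs
      · exact erase_eq_of_notMem haF
      · exact erase_insert haF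
    intro F hF F' hF' h
    rw [← hleft F hF, ← hleft F' hF', h]
  have hcard := card_le_card_of_injOn g hg hg_inj
  rw [card_powerset, card_erase_of_mem ha] at hcard
  have hX : 0 < #X := card_pos.mpr ⟨a, ha⟩
  calc 2 ^ #X = 2 * 2 ^ (#X - 1) := by rw [← pow_succ']; congr 1; omega
    _ ≤ _ := by omega

theorem card_biUnion_support_le [DecidableEq ι] (X : Finset α) (w : α → ι →₀ A) (r : ℕ)
    (hr : ∀ F ⊆ X, F.Nonempty → #(∑ a ∈ F, w a).support ≤ r) :
    #(X.biUnion fun a => (w a).support) ≤ 2 * r := by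
  classical
  set U := X.biUnion fun a => (w a).support
  let R : ι → Finset α → Prop := fun i F => (∑ a ∈ F, w a) i ≠ 0
  have hhalf : ∀ i ∈ U, 2 ^ #X ≤ 2 * #(X.powerset.bipartiteAbove R i) := by
    intro i hi
    obtain ⟨a, ha, hai⟩ := mem_biUnion.mp hi
    simpa [bipartiteAbove, R, Finsupp.finsetSum_apply] using
      two_pow_card_le_two_mul_card_filter_sum_ne_zero X (fun b => w b i) ha
        (Finsupp.mem_support_iff.mp hai)
  have hsmall : ∀ F ∈ X.powerset, #(U.bipartiteBelow R F) ≤ r := by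
    intro F hF
    rcases F.eq_empty_or_nonempty with rfl | hne
    · simp [bipartiteBelow, R]
    · refine (card_le_card fun i hi => ?_).trans (hr F (mem_powerset.mp hF) hne)
      exact Finsupp.mem_support_iff.mpr (mem_filter.mp hi).2
  have hcount : #U * 2 ^ #X ≤ 2 * r * 2 ^ #X := calc
    #U * 2 ^ #X ≤ ∑ i ∈ U, 2 * #(X.powerset.bipartiteAbove R i) := by
      simpa [mul_comm] using card_nsmul_le_sum U _ _ hhalf
    _ = 2 * ∑ F ∈ X.powerset, #(U.bipartiteBelow R F) := by
      rw [← mul_sum, sum_card_bipartiteAbove_eq_sum_card_bipartiteBelow]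
    _ ≤ 2 * (#X.powerset * r) := by
      simpa using Nat.mul_le_mul_left 2 (sum_le_card_nsmul _ _ r hsmall)
    _ = 2 * r * 2 ^ #X := by rw [card_powerset]; ring
  exact Nat.le_of_mul_le_mul_right hcount (by positivity)

def codeMultiset (e : ι → A → ℕ) (v : ι →₀ A) : Multiset ℕ :=
  v.support.val.map fun i => e i (v i)

theorem card_codeMultiset (e : ι → A → ℕ) (v : ι →₀ A) : (codeMultiset e v).card = #v.support :=
  Multiset.card_map _ _

theorem code_mem_codeMultiset (e : ι → A → ℕ) {v : ι →₀ A} {i : ι} (hi : i ∈ v.support) :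
    e i (v i) ∈ codeMultiset e v :=
  Multiset.mem_map_of_mem _ hi

theorem card_image_le_of_codes_mem [DecidableEq ι] [DecidableEq A] (X : Finset α)
    (w : α → ι →₀ A) (Z : ι → AddSubgroup A) (e : ι → A → ℕ) (S : Finset ℕ)
    (hZ : ∀ a ∈ X, ∀ i, w a i ∈ Z i) (he : ∀ i, Set.InjOn (e i) (Z i))
    (hS : ∀ a ∈ X, ∀ i ∈ (w a).support, e i (w a i) ∈ S) :
    #(X.image w) ≤ (#S + 1) ^ #(X.biUnion fun a => (w a).support) := by
  set U := X.biUnion fun a => (w a).support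
  set T : Finset ℕ := insert 0 (S.image (· + 1))
  -- A vector is recorded by its codes on `U`, shifted by one so that `0` marks a zero entry.
  let φ : (ι →₀ A) → U → ℕ := fun v i => if v i = 0 then 0 else e i (v i) + 1
  have hφ : Set.MapsTo φ (X.image w) (Fintype.piFinset fun _ : U => T : Finset (U → ℕ)) := by
    intro v hv
    obtain ⟨a, ha, rfl⟩ := mem_image.mp hv
    simp only [Fintype.coe_piFinset, Set.mem_pi, Set.mem_univ, mem_coe, forall_const]
    intro i
    by_cases hai : w a i = 0
    · simp [φ, hai, T]
    · simp only [φ, hai, if_false, T]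
      exact mem_insert_of_mem (mem_image_of_mem _ (hS a ha i (Finsupp.mem_support_iff.mpr hai)))
  have hφ_inj : Set.InjOn φ (X.image w) := by
    intro v hv v' hv' h
    obtain ⟨a, ha, rfl⟩ := mem_image.mp hv
    obtain ⟨b, hb, rfl⟩ := mem_image.mp hv'
    ext i
    by_cases hi : i ∈ U
    · have hi' := congrFun h ⟨i, hi⟩
      simp only [φ] at hi'
      split_ifs at hi' with h1 h2
      · rw [h1, h2]
      · exact he i (hZ a ha i) (hZ b hb i) (by omega)
    · have hU : ∀ c ∈ X, w c i = 0 := fun c hc =>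
        Finsupp.notMem_support_iff.mp fun h => hi (mem_biUnion.mpr ⟨c, hc, h⟩)
      rw [hU a ha, hU b hb]
  calc #(X.image w) ≤ #(Fintype.piFinset fun _ : U => T) := card_le_card_of_injOn φ hφ hφ_inj
    _ = #T ^ #U := by simp
    _ ≤ (#S + 1) ^ #U := by
      gcongr
      exact (card_insert_le _ _).trans (Nat.succ_le_succ card_image_le)

theorem card_filter_eq_le_of_codeMultiset_eq [DecidableEq ι] [DecidableEq A] (X : Finset α)
    (w : α → ι →₀ A) (Z : ι → AddSubgroup A) (e : ι → A → ℕ) (M : Multiset ℕ)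
    (hZ : ∀ a ∈ X, ∀ i, w a i ∈ Z i) (he : ∀ i, Set.InjOn (e i) (Z i)) (hw : ∀ a ∈ X, w a ≠ 0)
    (hM : ∀ F ⊆ X, F.Nonempty → codeMultiset e (∑ a ∈ F, w a) = M) (v : ι →₀ A) :
    #{a ∈ X | w a = v} ≤ M.card := by
  set Y := {a ∈ X | w a = v}
  rcases Y.eq_empty_or_nonempty with hY | ⟨a₁, ha₁⟩
  · simp [hY]
  obtain ⟨ha₁X, rfl⟩ := mem_filter.mp ha₁
  obtain ⟨i, hi⟩ := Finsupp.support_nonempty_iff.mpr (hw a₁ ha₁X)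
  have hcodes₁ : codeMultiset e (w a₁) = M := by
    simpa using hM {a₁} (singleton_subset_iff.mpr ha₁X) (singleton_nonempty _)
  -- `κ • w a₁` is a subset sum for `κ ≤ #Y`, so its support is that of `w a₁`.
  have hmult : ∀ κ ∈ Icc 1 #Y, κ • w a₁ i ≠ 0 ∧ e i (κ • w a₁ i) ∈ M := by
    intro κ hκ
    obtain ⟨hκ1, hκY⟩ := mem_Icc.mp hκ
    obtain ⟨F, hFY, hFκ⟩ := exists_subset_card_eq hκY
    have hsum : ∑ a ∈ F, w a = κ • w a₁ := by
      rw [sum_congr rfl fun a ha => (mem_filter.mp (hFY ha)).2, sum_const, hFκ]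
    have hcodes : codeMultiset e (κ • w a₁) = M := by
      rw [← hsum]; exact hM F (hFY.trans (filter_subset _ _)) (card_pos.mp (by omega))
    have hsupp : (κ • w a₁).support = (w a₁).support :=
      eq_of_subset_of_card_le Finsupp.support_smul
        (by rw [← card_codeMultiset e, ← card_codeMultiset e, hcodes, hcodes₁])
    have hi' : i ∈ (κ • w a₁).support := hsupp ▸ hi
    exact ⟨Finsupp.mem_support_iff.mp hi', hcodes ▸ code_mem_codeMultiset e hi'⟩
  have hlt : ∀ κ ∈ Icc 1 #Y, ∀ κ' ∈ Icc 1 #Y, κ < κ' → κ • w a₁ i ≠ κ' • w a₁ i := by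
    intro κ hκ κ' hκ' hκκ' h
    have hdiff := (hmult (κ' - κ) (by simp only [mem_Icc] at hκ hκ' ⊢; omega)).1
    rw [sub_nsmul _ hκκ'.le, h, add_neg_cancel] at hdiff
    exact hdiff rfl
  have hinj : Set.InjOn (fun κ : ℕ => e i (κ • w a₁ i)) (Icc 1 #Y) := by
    intro κ hκ κ' hκ' h
    have h' : κ • w a₁ i = κ' • w a₁ i :=
      he i (nsmul_mem (hZ a₁ ha₁X i) κ) (nsmul_mem (hZ a₁ ha₁X i) κ') h
    rcases lt_trichotomy κ κ' with hκκ' | hκκ' | hκκ'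
    · exact absurd h' (hlt κ hκ κ' hκ' hκκ')
    · exact hκκ'
    · exact absurd h'.symm (hlt κ' hκ' κ hκ hκκ')
  calc #Y = #(Icc 1 #Y) := by simp
    _ ≤ #M.toFinset := card_le_card_of_injOn _
        (fun κ hκ => Multiset.mem_toFinset.mpr (hmult κ hκ).2) hinj
    _ ≤ M.card := Multiset.toFinset_card_le M

def subsetSumBound (r : ℕ) : ℕ := r * (r + 1) ^ (2 * r)

theorem card_le_of_codeMultiset_eq [DecidableEq ι] [DecidableEq A] (X : Finset α)
    (w : α → ι →₀ A) (Z : ι → AddSubgroup A) (e : ι → A → ℕ) (M : Multiset ℕ)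
    (hZ : ∀ a ∈ X, ∀ i, w a i ∈ Z i) (he : ∀ i, Set.InjOn (e i) (Z i)) (hw : ∀ a ∈ X, w a ≠ 0)
    (hM : ∀ F ⊆ X, F.Nonempty → codeMultiset e (∑ a ∈ F, w a) = M) :
    #X ≤ subsetSumBound M.card := by
  have hsupport : ∀ F ⊆ X, F.Nonempty → #(∑ a ∈ F, w a).support ≤ M.card := fun F hF hne => by
    rw [← card_codeMultiset e, hM F hF hne]
  have hcodes : ∀ a ∈ X, ∀ i ∈ (w a).support, e i (w a i) ∈ M.toFinset := fun a ha i hi => by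
    have hMa := hM {a} (singleton_subset_iff.mpr ha) (singleton_nonempty a)
    rw [sum_singleton] at hMa
    exact Multiset.mem_toFinset.mpr (hMa ▸ code_mem_codeMultiset e hi)
  calc #X ≤ M.card * #(X.image w) := card_le_mul_card_image X _ fun v _ =>
        card_filter_eq_le_of_codeMultiset_eq X w Z e M hZ he hw hM v
    _ ≤ M.card * (#M.toFinset + 1) ^ #(X.biUnion fun a => (w a).support) := by
      gcongr; exact card_image_le_of_codes_mem X w Z e _ hZ he hcodes
    _ ≤ M.card * (M.card + 1) ^ (2 * M.card) := by
      gcongr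
      · omega
      · exact Multiset.toFinset_card_le M
      · exact card_biUnion_support_le X w _ hsupport
    _ = subsetSumBound M.card := rfl

end SubsetSums

section Independence

variable {G : Type*} [AddCommGroup G] {I : Set G}

/-- Independence in the sense of abelian group theory rather than `LinearIndependent ℤ`: only
the terms `f i • i` must vanish, so elements of finite order are allowed. -/
def IsIndependent (I : Set G) : Prop :=
  ∀ f : G →₀ ℤ, ↑f.support ⊆ I → (f.sum fun i z => z • i) = 0 → ∀ i, f i • i = 0

noncomputable def spanRepr (I : Set G) (x : G) : G →₀ ℤ :=
  Classical.epsilon fun f : G →₀ ℤ => ↑f.support ⊆ I ∧ (f.sum fun i z => z • i) = x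

theorem spanRepr_spec {x : G} (hx : x ∈ Submodule.span ℤ I) :
    ↑(spanRepr I x).support ⊆ I ∧ ((spanRepr I x).sum fun i z => z • i) = x :=
  Classical.epsilon_spec (Submodule.mem_span_set.mp hx)

noncomputable def spanCoord (I : Set G) (x : G) : G →₀ G :=
  Finsupp.onFinset (spanRepr I x).support (fun i => spanRepr I x i • i) fun i h =>
    Finsupp.mem_support_iff.mpr fun h0 => h (by rw [h0, zero_smul])

theorem spanCoord_apply (x i : G) : spanCoord I x i = spanRepr I x i • i := rfl

theorem spanCoord_mem_zmultiples (x i : G) : spanCoord I x i ∈ AddSubgroup.zmultiples i :=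
  AddSubgroup.zsmul_mem_zmultiples i _

theorem sum_spanCoord {x : G} (hx : x ∈ Submodule.span ℤ I) :
    ((spanCoord I x).sum fun _ v => v) = x := by
  rw [spanCoord, Finsupp.onFinset_sum _ fun _ => rfl]
  exact (spanRepr_spec hx).2

theorem spanCoord_ne_zero {x : G} (hx : x ∈ Submodule.span ℤ I) (hx0 : x ≠ 0) :
    spanCoord I x ≠ 0 := fun h =>
  hx0 (by rw [← sum_spanCoord hx, h, Finsupp.sum_zero_index])

namespace IsIndependent

theorem spanCoord_eq (hI : IsIndependent I) {f : G →₀ ℤ} (hf : ↑f.support ⊆ I) (i : G) :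
    spanCoord I (f.sum fun i z => z • i) i = f i • i := by
  classical
  obtain ⟨hsupp, hsum⟩ := spanRepr_spec (I := I) (Submodule.mem_span_set.mpr ⟨f, hf, rfl⟩)
  have hsub : ↑(spanRepr I (f.sum fun i z => z • i) - f).support ⊆ I := fun a ha => by
    rcases Finset.mem_union.mp (Finsupp.support_sub ha) with h | h
    exacts [hsupp h, hf h]
  have hdiff := hI _ hsub
    (by rw [Finsupp.sum_sub_index fun _ _ _ => sub_smul _ _ _, hsum, sub_self]) i
  rw [spanCoord_apply, ← sub_eq_zero, ← sub_smul]
  simpa using hdiff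

theorem spanCoord_sum (hI : IsIndependent I) {α : Type*} {s : Finset α} {x : α → G}
    (hx : ∀ a ∈ s, x a ∈ Submodule.span ℤ I) :
    spanCoord I (∑ a ∈ s, x a) = ∑ a ∈ s, spanCoord I (x a) := by
  classical
  have hsupp : ↑(∑ a ∈ s, spanRepr I (x a)).support ⊆ I := fun i hi => by
    obtain ⟨a, ha, hai⟩ := Finset.mem_biUnion.mp (Finsupp.support_finsetSum hi)
    exact (spanRepr_spec (hx a ha)).1 hai
  have hsum : ((∑ a ∈ s, spanRepr I (x a)).sum fun i z => z • i) = ∑ a ∈ s, x a := by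
    rw [← Finsupp.sum_finsetSum_index (h := fun i (z : ℤ) => z • i) (fun _ => zero_smul ℤ _)
      fun _ _ _ => add_smul _ _ _]
    exact Finset.sum_congr rfl fun a ha => (spanRepr_spec (hx a ha)).2
  ext i
  rw [← hsum, hI.spanCoord_eq hsupp, Finsupp.finsetSum_apply, Finsupp.finsetSum_apply,
    Finset.sum_smul]
  rfl

theorem insert (hI : IsIndependent I) {g : G}
    (hg : ∀ z : ℤ, z • g ∈ Submodule.span ℤ I → z • g = 0) : IsIndependent (insert g I) := by
  classical
  intro f hf hsum i
  set f' := f.erase g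
  have hf' : ↑f'.support ⊆ I := fun a ha => by
    have ha' : a ∈ f.support.erase g := by rw [← Finsupp.support_erase]; exact ha
    exact (hf (Finset.mem_of_mem_erase ha')).resolve_left (Finset.ne_of_mem_erase ha')
  have hsplit : f g • g + (f'.sum fun i z => z • i) = 0 := by
    conv_rhs => rw [← hsum, ← Finsupp.single_add_erase g f]
    rw [Finsupp.sum_add_index' (h := fun i (z : ℤ) => z • i) (fun _ => zero_smul ℤ _)
      fun _ _ _ => add_smul _ _ _, Finsupp.sum_single_index (zero_smul ℤ g)]
  have hg0 : f g • g = 0 := hg _ <| by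
    rw [eq_neg_of_add_eq_zero_left hsplit]
    exact neg_mem (Submodule.mem_span_set.mpr ⟨f', hf', rfl⟩)
  rw [hg0, zero_add] at hsplit
  by_cases hi : i = g
  · rwa [hi]
  · simpa [f', Finsupp.erase_ne hi] using hI f' hf' hsplit i

end IsIndependent

theorem isIndependent_empty : IsIndependent (∅ : Set G) := fun f hf _ i => by
  rw [Set.subset_empty_iff, Finset.coe_eq_empty, Finsupp.support_eq_empty] at hf
  simp [hf]

theorem exists_maximal_isIndependent : ∃ I : Set G, Maximal IsIndependent I := by
  obtain ⟨I, -, hI⟩ := zorn_subset_nonempty {I : Set G | IsIndependent I}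
    (fun c hc hchain hne => ⟨⋃₀ c, fun f hf hsum => by
      rw [Set.sUnion_eq_biUnion] at hf
      obtain ⟨t, htc, hft⟩ := DirectedOn.exists_mem_subset_of_finset_subset_biUnion (f := id)
        hne hchain.directedOn hf
      exact hc htc f hft hsum, fun _ => Set.subset_sUnion_of_mem⟩) ∅ isIndependent_empty
  exact ⟨I, hI⟩

theorem Maximal.exists_zsmul_mem_span_ne_zero (hI : Maximal IsIndependent I) {g : G}
    (hg : g ≠ 0) : ∃ z : ℤ, z • g ∈ Submodule.span ℤ I ∧ z • g ≠ 0 := by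
  by_contra! h
  have hgI : g ∈ I := hI.2 (hI.1.insert h) (Set.subset_insert g I) (Set.mem_insert g I)
  exact hg (by simpa using h 1 (by simpa using Submodule.subset_span hgI))

end Independence

section Colouring

variable {G : Type*} [AddCommGroup G] {I : Set G}

noncomputable def multiplier (I : Set G) (g : G) : ℤ :=
  Classical.epsilon fun z : ℤ => z • g ∈ Submodule.span ℤ I ∧ z • g ≠ 0

theorem multiplier_spec (hI : Maximal IsIndependent I) {g : G} (hg : g ≠ 0) :
    multiplier I g • g ∈ Submodule.span ℤ I ∧ multiplier I g • g ≠ 0 :=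
  Classical.epsilon_spec (hI.exists_zsmul_mem_span_ne_zero hg)

noncomputable def zmultiplesCode (i v : G) : ℕ :=
  Encodable.encode (Classical.epsilon fun z : ℤ => z • i = v)

theorem zmultiplesCode_injOn (i : G) :
    Set.InjOn (zmultiplesCode i) (AddSubgroup.zmultiples i) := by
  intro v hv v' hv' h
  have hz := Encodable.encode_injective h
  calc v = (Classical.epsilon fun z : ℤ => z • i = v) • i :=
        (Classical.epsilon_spec (AddSubgroup.mem_zmultiples_iff.mp hv)).symm
    _ = (Classical.epsilon fun z : ℤ => z • i = v') • i := by rw [hz]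
    _ = v' := Classical.epsilon_spec (AddSubgroup.mem_zmultiples_iff.mp hv')

noncomputable def colourData (I : Set G) (g : G) : ℤ × Multiset ℕ :=
  (multiplier I g, codeMultiset zmultiplesCode (spanCoord I (multiplier I g • g)))

open scoped Classical in
noncomputable def colouring (I : Set G) (g : G) : ℕ :=
  if g = 0 then 0 else
    Nat.pair (Encodable.encode (colourData I g)) (subsetSumBound (colourData I g).2.card) + 1

theorem colouring_zero : colouring I 0 = 0 := if_pos rfl

theorem subsetSumBound_lt_colouring {g : G} (hg : g ≠ 0) :
    subsetSumBound (colourData I g).2.card < colouring I g := by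
  rw [colouring, if_neg hg]
  exact Nat.lt_succ_of_le (Nat.right_le_pair _ _)

theorem colourData_eq_of_colouring_eq {g h : G} (hg : g ≠ 0) (hh : h ≠ 0)
    (hgh : colouring I g = colouring I h) : colourData I g = colourData I h := by
  rw [colouring, colouring, if_neg hg, if_neg hh, Nat.add_right_cancel_iff] at hgh
  exact Encodable.encode_injective (Nat.pair_eq_pair.mp hgh).1

theorem ncard_lt_of_forall_mem_FS_colouring_eq (hI : Maximal IsIndependent I) {X : Set G}
    {n : ℕ} (hX : 1 < X.ncard) (hmono : ∀ s ∈ FS X, colouring I s = n) : X.ncard < n := by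
  classical
  have hXfin : X.Finite := Set.finite_of_ncard_pos (by omega)
  obtain ⟨a₀, ha₀, ha₀0⟩ := Set.exists_ne_of_one_lt_ncard hX 0
  have hn : subsetSumBound (colourData I a₀).2.card < n :=
    hmono a₀ (mem_FS_of_mem ha₀) ▸ subsetSumBound_lt_colouring ha₀0
  have hFS0 : ∀ s ∈ FS X, s ≠ 0 := by
    rintro s hs rfl
    have h0 := hmono 0 hs
    rw [colouring_zero] at h0
    omega
  set m := multiplier I a₀
  set M := (colourData I a₀).2
  have hdata : ∀ s ∈ FS X, m • s ∈ Submodule.span ℤ I ∧ m • s ≠ 0 ∧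
      codeMultiset zmultiplesCode (spanCoord I (m • s)) = M := by
    intro s hs
    have hs₀ := colourData_eq_of_colouring_eq (hFS0 s hs) ha₀0
      ((hmono s hs).trans (hmono a₀ (mem_FS_of_mem ha₀)).symm)
    simp only [colourData, Prod.ext_iff] at hs₀
    obtain ⟨hm, hcodes⟩ := hs₀
    have hspec := multiplier_spec hI (hFS0 s hs)
    rw [hm] at hcodes hspec
    exact ⟨hspec.1, hspec.2, hcodes⟩
  have hXdata : ∀ a ∈ hXfin.toFinset, m • a ∈ Submodule.span ℤ I ∧ m • a ≠ 0 := fun a ha =>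
    (hdata a (mem_FS_of_mem (hXfin.mem_toFinset.mp ha))).imp_right And.left
  have hcard := card_le_of_codeMultiset_eq hXfin.toFinset (fun a => spanCoord I (m • a))
    AddSubgroup.zmultiples zmultiplesCode M (fun _ _ i => spanCoord_mem_zmultiples _ i)
    zmultiplesCode_injOn (fun a ha => spanCoord_ne_zero (hXdata a ha).1 (hXdata a ha).2)
    (fun F hF hne => by
      rw [← hI.1.spanCoord_sum fun a ha => (hXdata a (hF ha)).1, ← Finset.smul_sum]
      exact (hdata _ (sum_mem_FS (hXfin.subset_toFinset.mp hF) hne)).2.2)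
  rw [Set.ncard_eq_toFinset_card X hXfin]
  exact hcard.trans_lt hn

end Colouring

theorem stmt_12_general (G : Type*) [AddCommGroup G] :
    ∃ c : G → ℕ, ∀ n : ℕ, ¬ ∃ X : Set G, X.ncard = n + 2 ∧ ∀ s ∈ FS X, c s = n := by
  obtain ⟨I, hI⟩ := exists_maximal_isIndependent (G := G)
  refine ⟨colouring I, fun n ⟨X, hX, hmono⟩ => ?_⟩
  have := ncard_lt_of_forall_mem_FS_colouring_eq hI (by omega) hmono
  omega

/-- Every infinite abelian group `G` satisfies `G ↛ (2,3,4,…)^FS`: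
there is a colouring `c : G → ℕ` such that for every `n`, no `X ⊆ G` of cardinality
`n + 2` has `FS(X)` monochromatic in colour `n`. -/
theorem stmt_12 (G : Type*) [AddCommGroup G] [Infinite G] :
    ∃ c : G → ℕ, ∀ n : ℕ, ¬ ∃ X : Set G, X.ncard = n + 2 ∧ ∀ s ∈ FS X, c s = n :=
  stmt_12_general G
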